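/- Let u be a C² convex function on a bounded convex domain with sub-level sets Ω_t = {u < t}, where Ω_1 has diameter D. Then for any 0 < s < t ≤ 1 and any x ∈ Ω_s: |Du(x)| · ((t-s)/D)^{n-1} ≤ C(n) ∫_{Ω_t} det(D²u) dx for some dimensional constant C(n). -/

import Mathlib

open MeasureTheory Filter Bornology Metric Set
open scoped RealInnerProductSpace ENNReal

noncomputable section

/-- Hessian matrix of `u` at `x`. -/
def hess {n : ℕ} (u : EuclideanSpace ℝ (Fin n) → ℝ) (x : EuclideanSpace ℝ (Fin n)) :
    Matrix (Fin n) (Fin n) ℝ :=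
  fun i j => iteratedFDeriv ℝ 2 u x ![EuclideanSpace.single i 1, EuclideanSpace.single j 1]

/-- `k`-th elementary symmetric function of the eigenvalues of a matrix,
computed as the sum of its principal `k × k` minors. -/
def Smat {n : ℕ} (k : ℕ) (M : Matrix (Fin n) (Fin n) ℝ) : ℝ :=
  ∑ s ∈ Finset.univ.powersetCard k, (M.submatrix (Subtype.val : s → Fin n) Subtype.val).det

/-!
Let `p = ∇u(x)` and `r = (t - s) / D`. A vector `ξ` with `⟪ξ, y - x⟫ < t - u(x)` for all `y` in
the compact set `closure Ω_t` is a gradient of `u` on `Ω_t`: `u - ⟪ξ, ·⟫` attains its minimum over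
`closure Ω_t` at a point where `u < t`, i.e. at an interior critical point. By the gradient
inequality `⟪p, y - x⟫ ≤ t - u(x)` and `‖y - x‖ ≤ D`, so this holds on every ball `B(l p, r / 2)`,
`0 ≤ l ≤ 1/2`: the gradient image contains a cone of height `|p| / 2` over a ball of radius `r / 2`.
A row of about `|p| / r` disjoint balls of radius `r / 4` along its axis gives it volume at least
`c(n) |p| r^(n-1)`. The area formula bounds the volume of `∇u(Ω_t)` by `∫_{Ω_t} |det D²u|`, and
`det D²u ≥ 0` because the Hessian of a convex function is positive semidefinite.
-/

lemma ContDiff.differentiable_fderiv_two {F G : Type*} [NormedAddCommGroup F] [NormedSpace ℝ F]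
    [NormedAddCommGroup G] [NormedSpace ℝ G] {f : F → G} (h : ContDiff ℝ 2 f) :
    Differentiable ℝ (fderiv ℝ f) :=
  (h.fderiv_right (m := 1) le_rfl).differentiable one_ne_zero

section Convex

variable {F : Type*} [NormedAddCommGroup F] [NormedSpace ℝ F] {u : F → ℝ}

lemma ConvexOn.comp_lineMap (hconv : ConvexOn ℝ univ u) (x y : F) :
    ConvexOn ℝ univ (u ∘ AffineMap.lineMap (k := ℝ) x y) := by
  simpa using hconv.comp_affineMap (AffineMap.lineMap x y)

lemma ConvexOn.fderiv_apply_sub_le (hconv : ConvexOn ℝ univ u) {x : F}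
    (hu : DifferentiableAt ℝ u x) (y : F) : fderiv ℝ u x (y - x) ≤ u y - u x := by
  have hg : HasDerivAt (u ∘ AffineMap.lineMap (k := ℝ) x y) (fderiv ℝ u x (y - x)) 0 := by
    refine HasFDerivAt.comp_hasDerivAt _ ?_ AffineMap.hasDerivAt_lineMap
    simpa using hu.hasFDerivAt
  simpa [slope] using (hconv.comp_lineMap x y).le_slope_of_hasDerivAt trivial trivial one_pos hg

lemma ConvexOn.fderiv_fderiv_apply_self_nonneg (hconv : ConvexOn ℝ univ u)
    (hu : Differentiable ℝ u) {x : F} (hu' : DifferentiableAt ℝ (fderiv ℝ u) x) (v : F) :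
    0 ≤ fderiv ℝ (fderiv ℝ u) x v v := by
  set γ := AffineMap.lineMap (k := ℝ) x (x + v)
  have hγ (τ : ℝ) : HasDerivAt γ v τ := by
    simpa [γ] using AffineMap.hasDerivAt_lineMap (a := x) (b := x + v) (x := τ)
  have hg : deriv (u ∘ γ) = fun τ => fderiv ℝ u (γ τ) v :=
    funext fun τ => ((hu _).hasFDerivAt.comp_hasDerivAt τ (hγ τ)).deriv
  have hg' : HasDerivAt (deriv (u ∘ γ)) (fderiv ℝ (fderiv ℝ u) x v v) 0 := by
    rw [hg]
    have hu'' : HasFDerivAt (fderiv ℝ u) (fderiv ℝ (fderiv ℝ u) x) (γ 0) := by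
      simpa [γ] using hu'.hasFDerivAt
    exact (ContinuousLinearMap.apply ℝ ℝ v).hasFDerivAt.comp_hasDerivAt 0
      (hu''.comp_hasDerivAt 0 (hγ 0))
  have hmono : Monotone (deriv (u ∘ γ)) :=
    monotoneOn_univ.mp ((hconv.comp_lineMap x (x + v)).monotoneOn_deriv
      fun τ _ => (hu _).comp τ γ.differentiableAt)
  exact hg'.deriv ▸ hmono.deriv_nonneg

end Convex

section Geometry

variable {E : Type*} [NormedAddCommGroup E] [InnerProductSpace ℝ E] {u : E → ℝ}

lemma hasFDerivAt_gradient_of_hasFDerivAt_fderiv [CompleteSpace E] {x : E}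
    {f'' : E →L[ℝ] E →L[ℝ] ℝ} (h : HasFDerivAt (fderiv ℝ u) f'' x) :
    HasFDerivAt (gradient u)
      ((InnerProductSpace.toDual ℝ E).symm.toContinuousLinearEquiv.toContinuousLinearMap
        ∘L f'') x :=
  (InnerProductSpace.toDual ℝ E).symm.hasFDerivAt.comp x h

lemma mem_image_gradient_of_forall_inner_lt [CompleteSpace E] (hu : Differentiable ℝ u)
    {K : Set E} (hK : IsCompact K) {t : ℝ} (hsub : {y | u y < t} ⊆ K) {x : E} (hx : x ∈ K)
    {ξ : E} (hξ : ∀ y ∈ K, ⟪ξ, y - x⟫ < t - u x) : ξ ∈ gradient u '' {y | u y < t} := by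
  have hcont : Continuous fun z => u z - ⟪ξ, z⟫ := hu.continuous.sub (innerSL ℝ ξ).continuous
  obtain ⟨y, hyK, hmin⟩ := hK.exists_isMinOn ⟨x, hx⟩ hcont.continuousOn
  have hyt : u y < t := by
    have h₁ : u y - ⟪ξ, y⟫ ≤ u x - ⟪ξ, x⟫ := hmin hx
    have h₂ := hξ y hyK
    rw [inner_sub_right] at h₂
    linarith
  have hloc : IsLocalMin (fun z => u z - ⟪ξ, z⟫) y :=
    hmin.isLocalMin (mem_of_superset ((isOpen_lt hu.continuous continuous_const).mem_nhds hyt) hsub)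
  have hzero := hloc.hasFDerivAt_eq_zero ((hu y).hasFDerivAt.sub (innerSL ℝ ξ).hasFDerivAt)
  refine ⟨y, hyt, ext_inner_right ℝ fun w => ?_⟩
  simpa [inner_gradient_left, sub_eq_zero] using congrArg (· w) hzero

lemma inner_lt_of_mem_ball_smul {p y ξ : E} {a r D l : ℝ} (hpy : ⟪p, y⟫ ≤ a) (hy : ‖y‖ ≤ D)
    (hrD : r * D < a) (hl : l ∈ Icc (0 : ℝ) (1 / 2)) (hξ : ξ ∈ ball (l • p) (r / 2)) :
    ⟪ξ, y⟫ < a := by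
  rw [mem_ball_iff_norm] at hξ
  have hD : 0 ≤ D := (norm_nonneg y).trans hy
  have hr : 0 < r / 2 := (norm_nonneg _).trans_lt hξ
  have ha : 0 ≤ a := by nlinarith
  calc ⟪ξ, y⟫ = ⟪ξ - l • p, y⟫ + l * ⟪p, y⟫ := by rw [inner_sub_left, real_inner_smul_left]; ring
    _ ≤ r / 2 * D + 1 / 2 * a := add_le_add
        ((real_inner_le_norm _ _).trans (mul_le_mul hξ.le hy (norm_nonneg _) hr.le))
        ((mul_le_mul_of_nonneg_left hpy hl.1).trans (mul_le_mul_of_nonneg_right hl.2 ha))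
    _ < a := by linarith

lemma ball_subset_image_gradient [CompleteSpace E] (hu : Differentiable ℝ u)
    (hconv : ConvexOn ℝ univ u) {t r D l : ℝ} {x : E} (hK : IsCompact (closure {y | u y < t}))
    (hx : u x < t) (hD : ∀ y ∈ closure {y | u y < t}, ‖y - x‖ ≤ D) (hrD : r * D < t - u x)
    (hl : l ∈ Icc (0 : ℝ) (1 / 2)) :
    ball (l • gradient u x) (r / 2) ⊆ gradient u '' {y | u y < t} := by
  refine fun ξ hξ => mem_image_gradient_of_forall_inner_lt hu hK subset_closure
    (subset_closure hx) fun y hy => inner_lt_of_mem_ball_smul ?_ (hD y hy) hrD hl hξ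
  have hyt : u y ≤ t := closure_lt_subset_le hu.continuous continuous_const hy
  rw [inner_gradient_left]
  linarith [hconv.fderiv_apply_sub_le (hu x) y]

end Geometry

section BallPacking

variable {F : Type*} [NormedAddCommGroup F] [NormedSpace ℝ F]

lemma IsOpen.diam_pos [Nontrivial F] {U : Set F} (hU : IsOpen U) (hb : IsBounded U) {x : F}
    (hx : x ∈ U) : 0 < diam U := by
  obtain ⟨ε, hε, hball⟩ := Metric.isOpen_iff.mp hU x hx
  calc 0 < 2 * ε := by positivity
    _ = diam (ball x ε) := (diam_ball_eq x hε.le).symm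
    _ ≤ diam U := diam_mono hball hb

lemma disjoint_ball_natCast_smul {q : F} {k k' : ℕ} (h : k ≠ k') :
    Disjoint (ball ((k : ℝ) • q) (‖q‖ / 2)) (ball ((k' : ℝ) • q) (‖q‖ / 2)) := by
  refine ball_disjoint_ball ?_
  have hkk' : (1 : ℝ) ≤ |(k : ℝ) - k'| := by
    have : (1 : ℤ) ≤ |(k : ℤ) - k'| := Int.one_le_abs (sub_ne_zero.mpr (by exact_mod_cast h))
    exact_mod_cast this
  rw [dist_eq_norm, ← sub_smul, norm_smul, Real.norm_eq_abs]
  nlinarith [norm_nonneg q]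

variable [MeasurableSpace F] [BorelSpace F] (μ : Measure F) [μ.IsAddHaarMeasure]

lemma natCast_mul_measure_ball_le {S : Set F} {q : F} {N : ℕ}
    (hS : ∀ k < N, ball ((k : ℝ) • q) (‖q‖ / 2) ⊆ S) : N * μ (ball 0 (‖q‖ / 2)) ≤ μ S :=
  calc N * μ (ball 0 (‖q‖ / 2)) = ∑ k ∈ Finset.range N, μ (ball ((k : ℝ) • q) (‖q‖ / 2)) := by
        simp [Measure.addHaar_ball_center]
    _ = μ (⋃ k ∈ Finset.range N, ball ((k : ℝ) • q) (‖q‖ / 2)) :=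
        (measure_biUnion_finset (fun _ _ _ _ h => disjoint_ball_natCast_smul h)
          fun _ _ => measurableSet_ball).symm
    _ ≤ μ S := measure_mono (iUnion₂_subset fun k hk => hS k (Finset.mem_range.mp hk))

lemma ofReal_norm_div_mul_measure_ball_le {S : Set F} {p : F} {r : ℝ} (hr : 0 < r)
    (hS : ∀ l ∈ Icc (0 : ℝ) (1 / 2), ball (l • p) (r / 2) ⊆ S) :
    ENNReal.ofReal (‖p‖ / r) * μ (ball 0 (r / 4)) ≤ μ S := by
  rcases eq_or_ne p 0 with rfl | hp
  · simp
  have hp' : 0 < ‖p‖ := norm_pos_iff.mpr hp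
  set q := (r / (2 * ‖p‖)) • p
  have hq : ‖q‖ / 2 = r / 4 := by
    rw [norm_smul, Real.norm_eq_abs, abs_of_pos (by positivity)]
    field_simp
    ring
  calc ENNReal.ofReal (‖p‖ / r) * μ (ball 0 (r / 4))
      ≤ (⌈‖p‖ / r⌉₊ : ℝ≥0∞) * μ (ball 0 (‖q‖ / 2)) := by
        rw [hq, ← ENNReal.ofReal_natCast]
        gcongr
        exact Nat.le_ceil _
    _ ≤ μ S := by
        refine natCast_mul_measure_ball_le μ fun k hk => ?_
        have hk : (k : ℝ) * (r / (2 * ‖p‖)) ≤ 1 / 2 := by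
          have := Nat.lt_ceil.mp hk
          rw [lt_div_iff₀ hr] at this
          rw [mul_div_assoc', div_le_iff₀ (by positivity)]
          linarith
        rw [smul_smul, hq]
        exact (ball_subset_ball (by linarith)).trans (hS _ ⟨by positivity, hk⟩)

end BallPacking

section Hessian

open Matrix

variable {n : ℕ} {u : EuclideanSpace ℝ (Fin n) → ℝ}

lemma hess_apply (u : EuclideanSpace ℝ (Fin n) → ℝ) (x : EuclideanSpace ℝ (Fin n)) (i j : Fin n) :
    hess u x i j
      = fderiv ℝ (fderiv ℝ u) x (EuclideanSpace.single i 1) (EuclideanSpace.single j 1) := by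
  simp [hess, iteratedFDeriv_two_apply]

lemma dotProduct_hess_mulVec (u : EuclideanSpace ℝ (Fin n) → ℝ) (x : EuclideanSpace ℝ (Fin n))
    (y : Fin n → ℝ) :
    y ⬝ᵥ (hess u x *ᵥ y) = fderiv ℝ (fderiv ℝ u) x (WithLp.toLp 2 y) (WithLp.toLp 2 y) := by
  have hy : WithLp.toLp 2 y = ∑ i, y i • EuclideanSpace.single i (1 : ℝ) := by
    ext j; simp [Pi.single_apply]
  simp only [hy, map_sum, map_smul, FunLike.coe_sum, FunLike.coe_smul, Finset.sum_apply,
    Pi.smul_apply, smul_eq_mul, dotProduct, mulVec, hess_apply, Finset.mul_sum]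
  rw [Finset.sum_comm]
  simp only [mul_comm, mul_left_comm]

lemma det_toDual_symm_comp_fderiv_fderiv (u : EuclideanSpace ℝ (Fin n) → ℝ)
    (x : EuclideanSpace ℝ (Fin n)) :
    ((InnerProductSpace.toDual ℝ _).symm.toContinuousLinearEquiv.toContinuousLinearMap ∘L
      fderiv ℝ (fderiv ℝ u) x).det = (hess u x).det := by
  rw [ContinuousLinearMap.det,
    ← LinearMap.det_toMatrix (EuclideanSpace.basisFun (Fin n) ℝ).toBasis, ← det_transpose]
  congr 1
  ext i j
  simp only [LinearMap.toMatrix_apply, transpose_apply, hess_apply]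
  simp [← InnerProductSpace.toDual_symm_apply, EuclideanSpace.inner_single_right]

lemma hess_posSemidef (hu : ContDiff ℝ 2 u) (hconv : ConvexOn ℝ univ u)
    (x : EuclideanSpace ℝ (Fin n)) : (hess u x).PosSemidef := by
  refine PosSemidef.of_dotProduct_mulVec_nonneg ?_ fun y => ?_
  · ext i j
    simp only [conjTranspose_apply, star_trivial, hess_apply]
    exact hu.contDiffAt.isSymmSndFDerivAt (by simp) _ _
  · rw [star_trivial, dotProduct_hess_mulVec]
    exact hconv.fderiv_fderiv_apply_self_nonneg (hu.differentiable two_ne_zero)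
      (hu.differentiable_fderiv_two x) _

lemma continuous_det_hess (hu : ContDiff ℝ 2 u) : Continuous fun x => (hess u x).det :=
  Continuous.matrix_det <| continuous_matrix fun _ _ =>
    (continuous_eval_const _).comp (hu.continuous_iteratedFDeriv le_rfl)

lemma det_hess_nonneg (hu : ContDiff ℝ 2 u) (hconv : ConvexOn ℝ univ u)
    (x : EuclideanSpace ℝ (Fin n)) : 0 ≤ (hess u x).det :=
  (hess_posSemidef hu hconv x).det_nonneg

lemma volume_image_gradient_le (hu : ContDiff ℝ 2 u) (hconv : ConvexOn ℝ univ u)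
    {Ω : Set (EuclideanSpace ℝ (Fin n))} (hΩ : MeasurableSet Ω)
    (hint : IntegrableOn (fun x => (hess u x).det) Ω) :
    volume (gradient u '' Ω) ≤ ENNReal.ofReal (∫ x in Ω, (hess u x).det) := by
  have hderiv (x) :=
    hasFDerivAt_gradient_of_hasFDerivAt_fderiv (hu.differentiable_fderiv_two x).hasFDerivAt
  calc volume (gradient u '' Ω)
      ≤ ∫⁻ x in Ω, ENNReal.ofReal |(_ : _ →L[ℝ] _).det| :=
        addHaar_image_le_lintegral_abs_det_fderiv volume hΩ fun x _ => (hderiv x).hasFDerivWithinAt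
    _ = ∫⁻ x in Ω, ENNReal.ofReal (hess u x).det := by
        simp only [det_toDual_symm_comp_fderiv_fderiv, abs_of_nonneg (det_hess_nonneg hu hconv _)]
    _ = ENNReal.ofReal (∫ x in Ω, (hess u x).det) :=
        (ofReal_integral_eq_lintegral_ofReal hint (.of_forall (det_hess_nonneg hu hconv))).symm

lemma norm_gradient_div_mul_volume_ball_le_integral (hn : 0 < n) (hu : ContDiff ℝ 2 u)
    (hconv : ConvexOn ℝ univ u) {t r D : ℝ} {x : EuclideanSpace ℝ (Fin n)}
    (hK : IsCompact (closure {y | u y < t})) (hx : u x < t)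
    (hD : ∀ y ∈ closure {y | u y < t}, ‖y - x‖ ≤ D) (hr : 0 < r) (hrD : r * D < t - u x) :
    ‖gradient u x‖ / r * ((r / 4) ^ n * (volume (ball (0 : EuclideanSpace ℝ (Fin n)) 1)).toReal)
      ≤ ∫ y in {y | u y < t}, (hess u y).det := by
  have : Nonempty (Fin n) := ⟨⟨0, hn⟩⟩
  have hΩ : MeasurableSet {y | u y < t} := (isOpen_lt hu.continuous continuous_const).measurableSet
  have hvol := (ofReal_norm_div_mul_measure_ball_le volume hr fun l hl =>
    ball_subset_image_gradient (hu.differentiable two_ne_zero) hconv hK hx hD hrD hl).trans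
    (volume_image_gradient_le hu hconv hΩ
      (((continuous_det_hess hu).continuousOn.integrableOn_compact hK).mono_set subset_closure))
  rwa [Measure.addHaar_ball _ _ (by positivity), finrank_euclideanSpace_fin,
    ← ENNReal.ofReal_toReal (measure_ball_lt_top (x := (0 : EuclideanSpace ℝ (Fin n)))).ne,
    ← ENNReal.ofReal_mul (by positivity), ← ENNReal.ofReal_mul (by positivity),
    ENNReal.ofReal_le_ofReal_iff (setIntegral_nonneg hΩ fun y _ => det_hess_nonneg hu hconv y)]
    at hvol

end Hessian

theorem gradient_estimate_by_hessian_integral (n : ℕ) (hn : 0 < n) :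
    ∃ C > (0:ℝ), ∀ u : EuclideanSpace ℝ (Fin n) → ℝ,
      ContDiff ℝ 2 u → ConvexOn ℝ Set.univ u →
      IsBounded {x | u x < 1} → Convex ℝ {x | u x < 1} →
      ∀ s t : ℝ, 0 < s → s < t → t ≤ 1 →
        ∀ x : EuclideanSpace ℝ (Fin n), u x < s →
          ‖gradient u x‖ * ((t - s) / Metric.diam {y | u y < 1}) ^ (n - 1) ≤
            C * ∫ y in {y | u y < t}, (hess u y).det := by
  have : Nonempty (Fin n) := ⟨⟨0, hn⟩⟩
  set v := (volume (ball (0 : EuclideanSpace ℝ (Fin n)) 1)).toReal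
  have hv : 0 < v := ENNReal.toReal_pos (measure_ball_pos _ _ one_pos).ne' measure_ball_lt_top.ne
  refine ⟨4 ^ n / v, by positivity, fun u hu hconv hbdd _ s t _ hst ht1 x hxs => ?_⟩
  have hsub : {y | u y < t} ⊆ {y | u y < 1} := fun y hy => lt_of_lt_of_le hy ht1
  have hx : x ∈ {y | u y < 1} := hxs.trans (hst.trans_le ht1)
  have hD : 0 < diam {y | u y < 1} := (isOpen_lt hu.continuous continuous_const).diam_pos hbdd hx
  have hdiam (y) (hy : y ∈ closure {y | u y < t}) : ‖y - x‖ ≤ diam {y | u y < 1} := by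
    rw [← dist_eq_norm, ← diam_closure]
    exact dist_le_diam_of_mem hbdd.closure (closure_mono hsub hy) (subset_closure hx)
  set r := (t - s) / diam {y | u y < 1}
  have hr : 0 < r := div_pos (sub_pos.2 hst) hD
  have hrD : r * diam {y | u y < 1} < t - u x := by rw [div_mul_cancel₀ _ hD.ne']; linarith
  have hmain := norm_gradient_div_mul_volume_ball_le_integral hn hu hconv
    (hbdd.subset hsub).isCompact_closure (hxs.trans hst) hdiam hr hrD
  clear_value r
  obtain ⟨k, rfl⟩ := Nat.exists_eq_add_one_of_ne_zero hn.ne'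
  calc ‖gradient u x‖ * r ^ (k + 1 - 1)
      = 4 ^ (k + 1) / v * (‖gradient u x‖ / r * ((r / 4) ^ (k + 1) * v)) := by
        rw [Nat.add_sub_cancel, div_pow]
        field_simp
        ring
    _ ≤ _ := by gcongr

end
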